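/- Let 0 < ψ ≤ π/2, φ = ψ/π, θ > 0, and h(x) = (θ sin ψ / π) · B_{sin²(πx/(2θ))}(φ, 1−φ). Then h is strictly increasing on (0, θ], maps (0, θ] onto (0, θ], and its inverse satisfies h^(−1)(t) ≥ (2/π)·(ψ/sin ψ)^(1/(2φ)) · θ^(1−1/(2φ)) · t^(1/(2φ)) for all t ∈ (0, θ]. -/

import Mathlib

open Real MeasureTheory Set

/-- The incomplete Beta function `B_t(a,b) = ∫_0^t s^(a-1) (1-s)^(b-1) ds`. -/
noncomputable def incBeta (a b x : ℝ) : ℝ :=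
  ∫ s in (0:ℝ)..x, s ^ (a - 1) * (1 - s) ^ (b - 1)

/-- `h(x) = (θ sin ψ / π) B_{sin²(πx/(2θ))}(φ, 1-φ)`. -/
noncomputable def hFn (ψ θ φ x : ℝ) : ℝ :=
  θ * Real.sin ψ / Real.pi * incBeta φ (1 - φ) (Real.sin (Real.pi * x / (2 * θ)) ^ 2)

/-!
Substituting `s = sin² v` turns `B_{sin² u}(φ, 1 - φ)` into `∫₀ᵘ 2 tan^(2φ-1) v dv`. Since
`tan v ≥ v` and `2φ - 1 ≤ 0`, this is at most `u^(2φ) / φ`, and solving `t = h(x)` for `x` turns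
this upper bound on `h` into the lower bound on `h⁻¹`. Monotonicity and the image come from the
positivity of the Beta integrand, continuity, and the reflection formula
`B(φ, 1 - φ) = π / sin (π φ)`, which gives `h(θ) = θ`.
-/

noncomputable def betaIntegrand (a b s : ℝ) : ℝ := s ^ (a - 1) * (1 - s) ^ (b - 1)

section IncompleteBeta

variable {a b : ℝ}

lemma betaIntegrand_pos {s : ℝ} (hs₀ : 0 < s) (hs₁ : s < 1) : 0 < betaIntegrand a b s :=
  mul_pos (rpow_pos_of_pos hs₀ _) (rpow_pos_of_pos (sub_pos.2 hs₁) _)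

lemma continuousOn_betaIntegrand : ContinuousOn (betaIntegrand a b) (Ioo 0 1) := by
  intro s hs
  refine ContinuousAt.continuousWithinAt ?_
  unfold betaIntegrand
  exact ((continuousAt_id.rpow_const (Or.inl hs.1.ne')).mul
    ((continuousAt_const.sub continuousAt_id).rpow_const (Or.inl (sub_pos.2 hs.2).ne')))

lemma ofReal_betaIntegrand {s : ℝ} (hs : s ∈ Icc 0 1) :
    (betaIntegrand a b s : ℂ) = (s : ℂ) ^ ((a : ℂ) - 1) * (1 - (s : ℂ)) ^ ((b : ℂ) - 1) := by
  have h1 : 0 ≤ 1 - s := sub_nonneg.2 hs.2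
  rw [betaIntegrand, Complex.ofReal_mul, Complex.ofReal_cpow hs.1, Complex.ofReal_cpow h1]
  push_cast
  rfl

lemma integrableOn_betaIntegrand (ha : 0 < a) (hb : 0 < b) :
    IntegrableOn (betaIntegrand a b) (Ioc 0 1) := by
  have hc := Complex.betaIntegral_convergent (u := a) (v := b) (by simpa) (by simpa)
  rw [intervalIntegrable_iff_integrableOn_Ioc_of_le zero_le_one] at hc
  refine IntegrableOn.congr_fun (Integrable.re hc) (fun s hs => ?_) measurableSet_Ioc
  simp only [← ofReal_betaIntegrand (Ioc_subset_Icc_self hs), RCLike.re_to_complex,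
    Complex.ofReal_re]

lemma intervalIntegrable_betaIntegrand (ha : 0 < a) (hb : 0 < b) {x y : ℝ}
    (hx : 0 ≤ x) (hxy : x ≤ y) (hy : y ≤ 1) :
    IntervalIntegrable (betaIntegrand a b) volume x y := by
  rw [intervalIntegrable_iff_integrableOn_Ioc_of_le hxy]
  exact (integrableOn_betaIntegrand ha hb).mono_set (Ioc_subset_Ioc hx hy)

lemma incBeta_zero : incBeta a b 0 = 0 :=
  intervalIntegral.integral_same

lemma incBeta_one (ha : 0 < a) (hb : 0 < b) : incBeta a b 1 = ProbabilityTheory.beta a b := by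
  rw [ProbabilityTheory.beta_eq_betaIntegralReal a b ha hb, Complex.betaIntegral,
    ← intervalIntegral.integral_congr (fun s hs => ofReal_betaIntegrand (a := a) (b := b)
      (by rwa [uIcc_of_le zero_le_one] at hs)), intervalIntegral.integral_ofReal,
    Complex.ofReal_re]
  rfl

lemma incBeta_one_sub_one (ha₀ : 0 < a) (ha₁ : a < 1) :
    incBeta a (1 - a) 1 = π / Real.sin (π * a) := by
  rw [incBeta_one ha₀ (sub_pos.2 ha₁), ProbabilityTheory.beta, add_sub_cancel,
    Real.Gamma_one, div_one, Real.Gamma_mul_Gamma_one_sub]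

lemma continuousOn_incBeta (ha : 0 < a) (hb : 0 < b) : ContinuousOn (incBeta a b) (Icc 0 1) := by
  have h := intervalIntegral.continuousOn_primitive_interval (a := 0) (b := 1) (μ := volume)
    (f := betaIntegrand a b) (by
      rw [uIcc_of_le zero_le_one, integrableOn_Icc_iff_integrableOn_Ioc]
      exact integrableOn_betaIntegrand ha hb)
  rwa [uIcc_of_le zero_le_one] at h

lemma strictMonoOn_incBeta (ha : 0 < a) (hb : 0 < b) : StrictMonoOn (incBeta a b) (Icc 0 1) := by
  intro x hx y hy hxy
  have hxy_pos : 0 < ∫ s in x..y, betaIntegrand a b s :=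
    intervalIntegral.intervalIntegral_pos_of_pos_on
      (intervalIntegrable_betaIntegrand ha hb hx.1 hxy.le hy.2)
      (fun s hs => betaIntegrand_pos (hx.1.trans_lt hs.1) (hs.2.trans_le hy.2)) hxy
  have hsplit : incBeta a b x + ∫ s in x..y, betaIntegrand a b s = incBeta a b y :=
    intervalIntegral.integral_add_adjacent_intervals
      (intervalIntegrable_betaIntegrand ha hb le_rfl hx.1 hx.2)
      (intervalIntegrable_betaIntegrand ha hb hx.1 hxy.le hy.2)
  linarith

lemma hasDerivAt_incBeta (ha : 0 < a) (hb : 0 < b) {x : ℝ} (hx : x ∈ Ioo 0 1) :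
    HasDerivAt (incBeta a b) (betaIntegrand a b x) x :=
  intervalIntegral.integral_hasDerivAt_right
    (intervalIntegrable_betaIntegrand ha hb le_rfl hx.1.le hx.2.le)
    (continuousOn_betaIntegrand.stronglyMeasurableAtFilter isOpen_Ioo x hx)
    (continuousOn_betaIntegrand.continuousAt (Ioo_mem_nhds hx.1 hx.2))

end IncompleteBeta

section SinSq

variable {u : ℝ}

lemma sin_sq_mem_Icc (u : ℝ) : Real.sin u ^ 2 ∈ Icc 0 1 :=
  ⟨sq_nonneg _, sin_sq_le_one u⟩

lemma sin_sq_mem_Ioo (hu : u ∈ Ioo 0 (π / 2)) : Real.sin u ^ 2 ∈ Ioo 0 1 := by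
  have hsin : 0 < Real.sin u := sin_pos_of_pos_of_lt_pi hu.1 (by linarith [hu.2, pi_pos])
  have hcos : 0 < Real.cos u := cos_pos_of_mem_Ioo ⟨by linarith [hu.1, pi_pos], hu.2⟩
  exact ⟨by positivity, by nlinarith [sin_sq_add_cos_sq u]⟩

lemma strictMonoOn_sin_sq : StrictMonoOn (fun u => Real.sin u ^ 2) (Icc 0 (π / 2)) := by
  intro x hx y hy hxy
  have hIcc : Icc 0 (π / 2) ⊆ Icc (-(π / 2)) (π / 2) := Icc_subset_Icc (by linarith [pi_pos]) le_rfl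
  exact pow_lt_pow_left₀ (strictMonoOn_sin (hIcc hx) (hIcc hy) hxy)
    (sin_nonneg_of_nonneg_of_le_pi hx.1 (by linarith [hx.2, pi_pos])) two_ne_zero

lemma betaIntegrand_sin_sq_mul (a b : ℝ) (hu : u ∈ Ioo 0 (π / 2)) :
    betaIntegrand a b (Real.sin u ^ 2) * (2 * Real.sin u * Real.cos u) =
      2 * Real.sin u ^ (2 * a - 1) * Real.cos u ^ (2 * b - 1) := by
  have hsin : 0 < Real.sin u := sin_pos_of_pos_of_lt_pi hu.1 (by linarith [hu.2, pi_pos])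
  have hcos : 0 < Real.cos u := cos_pos_of_mem_Ioo ⟨by linarith [hu.1, pi_pos], hu.2⟩
  rw [betaIntegrand, ← cos_sq', ← rpow_natCast, ← rpow_natCast, ← rpow_mul hsin.le,
    ← rpow_mul hcos.le, Nat.cast_ofNat]
  have hs : Real.sin u ^ (2 * a - 1) = Real.sin u ^ (2 * (a - 1)) * Real.sin u := by
    rw [← rpow_add_one hsin.ne']; ring_nf
  have hc : Real.cos u ^ (2 * b - 1) = Real.cos u ^ (2 * (b - 1)) * Real.cos u := by
    rw [← rpow_add_one hcos.ne']; ring_nf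
  rw [hs, hc]
  ring

lemma hasDerivAt_incBeta_sin_sq {a b : ℝ} (ha : 0 < a) (hb : 0 < b) (hu : u ∈ Ioo 0 (π / 2)) :
    HasDerivAt (fun u => incBeta a b (Real.sin u ^ 2))
      (2 * Real.sin u ^ (2 * a - 1) * Real.cos u ^ (2 * b - 1)) u := by
  rw [← betaIntegrand_sin_sq_mul a b hu]
  have hsin_sq : HasDerivAt (fun u => Real.sin u ^ 2) (2 * Real.sin u * Real.cos u) u := by
    simpa using (hasDerivAt_sin u).fun_pow 2
  exact (hasDerivAt_incBeta ha hb (sin_sq_mem_Ioo hu)).comp u hsin_sq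

lemma incBeta_sin_sq_le {a : ℝ} (ha₀ : 0 < a) (ha : a ≤ 1 / 2) (hu : u ∈ Icc 0 (π / 2)) :
    incBeta a (1 - a) (Real.sin u ^ 2) ≤ u ^ (2 * a) / a := by
  have hb : 0 < 1 - a := by linarith
  set g : ℝ → ℝ := fun u => u ^ (2 * a) / a - incBeta a (1 - a) (Real.sin u ^ 2)
  have hg_mono : MonotoneOn g (Icc 0 (π / 2)) := by
    refine monotoneOn_of_hasDerivWithinAt_nonneg (convex_Icc _ _) ?_
      (f' := fun v => 2 * v ^ (2 * a - 1) - 2 * Real.tan v ^ (2 * a - 1)) ?_ ?_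
    · refine ContinuousOn.sub (by fun_prop (disch := positivity)) ?_
      exact ((continuousOn_incBeta ha₀ hb).comp_continuous (by fun_prop)
        sin_sq_mem_Icc).continuousOn
    · rw [interior_Icc]
      intro v hv
      have hsin : 0 < Real.sin v := sin_pos_of_pos_of_lt_pi hv.1 (by linarith [hv.2, pi_pos])
      have hcos : 0 < Real.cos v := cos_pos_of_mem_Ioo ⟨by linarith [hv.1, pi_pos], hv.2⟩
      have hpow : HasDerivAt (fun u => u ^ (2 * a) / a) (2 * v ^ (2 * a - 1)) v := by
        refine ((hasDerivAt_rpow_const (p := 2 * a) (Or.inl hv.1.ne')).div_const a).congr_deriv ?_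
        field_simp
      have htan : Real.tan v ^ (2 * a - 1) =
          Real.sin v ^ (2 * a - 1) * Real.cos v ^ (2 * (1 - a) - 1) := by
        rw [tan_eq_sin_div_cos, div_rpow hsin.le hcos.le, div_eq_mul_inv, ← rpow_neg hcos.le]
        ring_nf
      refine (hpow.sub (hasDerivAt_incBeta_sin_sq ha₀ hb hv)).hasDerivWithinAt.congr_deriv ?_
      rw [htan]; ring
    · rw [interior_Icc]
      intro v hv
      have : Real.tan v ^ (2 * a - 1) ≤ v ^ (2 * a - 1) :=
        rpow_le_rpow_of_nonpos hv.1 (lt_tan hv.1 hv.2).le (by linarith)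
      linarith
  have hg0 : g 0 = 0 := by
    simp [g, incBeta_zero, zero_rpow (by positivity : 2 * a ≠ 0)]
  have := hg_mono (left_mem_Icc.2 (by positivity)) hu hu.1
  simpa [hg0, g, sub_nonneg] using this

end SinSq

theorem StrictMonoOn.image_Ioc_eq {α δ : Type*} [ConditionallyCompleteLinearOrder α]
    [TopologicalSpace α] [OrderTopology α] [DenselyOrdered α] [LinearOrder δ]
    [TopologicalSpace δ] [OrderClosedTopology δ] {f : α → δ} {a b : α} (hab : a ≤ b)
    (hf : StrictMonoOn f (Icc a b)) (hf_cont : ContinuousOn f (Icc a b)) :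
    f '' Ioc a b = Ioc (f a) (f b) := by
  refine Subset.antisymm ?_ (intermediate_value_Ioc hab hf_cont)
  rintro _ ⟨x, hx, rfl⟩
  exact ⟨hf (left_mem_Icc.2 hab) (Ioc_subset_Icc_self hx) hx.1,
    hf.monotoneOn (Ioc_subset_Icc_self hx) (right_mem_Icc.2 hab) hx.2⟩

lemma rpow_one_div_le_of_le_mul_rpow {t A u p : ℝ} (ht : 0 ≤ t) (hA : 0 ≤ A) (hu : 0 ≤ u)
    (hp : 0 < p) (h : t ≤ A * u ^ p) : t ^ (1 / p) ≤ A ^ (1 / p) * u := by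
  calc t ^ (1 / p) ≤ (A * u ^ p) ^ (1 / p) := rpow_le_rpow ht h (by positivity)
    _ = A ^ (1 / p) * u := by
      rw [mul_rpow hA (by positivity), one_div, rpow_rpow_inv hu hp.ne']

section HFn

variable {θ φ : ℝ}

lemma mul_div_mem_Icc_pi_div_two (hθ : 0 < θ) {x : ℝ} (hx : x ∈ Icc 0 θ) :
    π * x / (2 * θ) ∈ Icc 0 (π / 2) := by
  refine ⟨by have := hx.1; positivity, ?_⟩
  rw [div_le_iff₀ (by positivity)]
  nlinarith [hx.2, pi_pos]

lemma hFn_zero (ψ : ℝ) : hFn ψ θ φ 0 = 0 := by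
  simp [hFn, incBeta_zero]

lemma hFn_self (hθ : θ ≠ 0) (hφ₀ : 0 < φ) (hφ₁ : φ < 1) : hFn (π * φ) θ φ θ = θ := by
  have hsin : Real.sin (π * φ) ≠ 0 :=
    (sin_pos_of_pos_of_lt_pi (by positivity) (by nlinarith [pi_pos])).ne'
  have hquarter : π * θ / (2 * θ) = π / 2 := by field_simp
  rw [hFn, hquarter, sin_pi_div_two, one_pow, incBeta_one_sub_one hφ₀ hφ₁]
  field_simp

lemma continuous_hFn (ψ : ℝ) (hφ₀ : 0 < φ) (hφ₁ : φ < 1) : Continuous (hFn ψ θ φ) :=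
  continuous_const.mul <| (continuousOn_incBeta hφ₀ (sub_pos.2 hφ₁)).comp_continuous
    (by fun_prop) fun _ => sin_sq_mem_Icc _

lemma strictMonoOn_hFn {ψ : ℝ} (hsin : 0 < Real.sin ψ) (hθ : 0 < θ) (hφ₀ : 0 < φ)
    (hφ₁ : φ < 1) : StrictMonoOn (hFn ψ θ φ) (Icc 0 θ) := by
  intro x hx y hy hxy
  have hsin_sq : Real.sin (π * x / (2 * θ)) ^ 2 < Real.sin (π * y / (2 * θ)) ^ 2 :=
    strictMonoOn_sin_sq (mul_div_mem_Icc_pi_div_two hθ hx) (mul_div_mem_Icc_pi_div_two hθ hy)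
      (by gcongr)
  exact mul_lt_mul_of_pos_left (strictMonoOn_incBeta hφ₀ (sub_pos.2 hφ₁) (sin_sq_mem_Icc _)
    (sin_sq_mem_Icc _) hsin_sq) (by positivity)

lemma hFn_le (hθ : 0 < θ) (hφ₀ : 0 < φ) (hφ : φ ≤ 1 / 2) {x : ℝ} (hx : x ∈ Icc 0 θ) :
    hFn (π * φ) θ φ x ≤ θ * Real.sin (π * φ) / (π * φ) * (π * x / (2 * θ)) ^ (2 * φ) := by
  have hsin : 0 ≤ Real.sin (π * φ) :=
    sin_nonneg_of_nonneg_of_le_pi (by positivity) (by nlinarith [pi_pos])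
  calc hFn (π * φ) θ φ x
      ≤ θ * Real.sin (π * φ) / π * ((π * x / (2 * θ)) ^ (2 * φ) / φ) :=
        mul_le_mul_of_nonneg_left (incBeta_sin_sq_le hφ₀ hφ (mul_div_mem_Icc_pi_div_two hθ hx))
          (by positivity)
    _ = θ * Real.sin (π * φ) / (π * φ) * (π * x / (2 * θ)) ^ (2 * φ) := by
        field_simp

lemma mul_hFn_rpow_le (hθ : 0 < θ) (hφ₀ : 0 < φ) (hφ : φ ≤ 1 / 2) {x : ℝ} (hx : x ∈ Icc 0 θ) :
    2 / π * (π * φ / Real.sin (π * φ)) ^ (1 / (2 * φ)) * θ ^ (1 - 1 / (2 * φ)) *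
      hFn (π * φ) θ φ x ^ (1 / (2 * φ)) ≤ x := by
  set e := 1 / (2 * φ)
  set u := π * x / (2 * θ)
  have hsin : 0 < Real.sin (π * φ) :=
    sin_pos_of_pos_of_lt_pi (by positivity) (by nlinarith [pi_pos])
  have hu : 0 ≤ u := (mul_div_mem_Icc_pi_div_two hθ hx).1
  have hFn_nonneg : 0 ≤ hFn (π * φ) θ φ x := by
    have h := (strictMonoOn_hFn hsin hθ hφ₀ (by linarith)).monotoneOn (left_mem_Icc.2 hθ.le) hx hx.1
    rwa [hFn_zero] at h
  have hA : (π * φ / Real.sin (π * φ)) ^ e * (θ * Real.sin (π * φ) / (π * φ)) ^ e = θ ^ e := by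
    rw [← mul_rpow (by positivity) (by positivity)]
    congr 1
    field_simp
  calc 2 / π * (π * φ / Real.sin (π * φ)) ^ e * θ ^ (1 - e) * hFn (π * φ) θ φ x ^ e
      ≤ 2 / π * (π * φ / Real.sin (π * φ)) ^ e * θ ^ (1 - e) *
          ((θ * Real.sin (π * φ) / (π * φ)) ^ e * u) := by
        gcongr
        exact rpow_one_div_le_of_le_mul_rpow hFn_nonneg (by positivity) hu (by positivity)
          (hFn_le hθ hφ₀ hφ hx)
    _ = 2 / π * (θ ^ (1 - e) * θ ^ e) * u := by rw [← hA]; ring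
    _ = x := by
        rw [← rpow_add hθ, sub_add_cancel, rpow_one]
        simp only [u]
        field_simp

end HFn

theorem hFn_strictMono_image_and_inverse_bound (ψ θ : ℝ) (hψ : 0 < ψ)
    (hψ' : ψ ≤ Real.pi / 2) (hθ : 0 < θ) (φ : ℝ) (hφ : φ = ψ / Real.pi) :
    StrictMonoOn (hFn ψ θ φ) (Set.Ioc 0 θ) ∧
    hFn ψ θ φ '' Set.Ioc 0 θ = Set.Ioc 0 θ ∧
    -- the bound on the inverse: for `t = h(x)` one has
    -- `h⁻¹(t) = x ≥ (2/π) (ψ/sin ψ)^{1/(2φ)} θ^{1-1/(2φ)} t^{1/(2φ)}`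
    ∀ x ∈ Set.Ioc 0 θ,
      x ≥ 2 / Real.pi * (ψ / Real.sin ψ) ^ (1 / (2 * φ)) * θ ^ (1 - 1 / (2 * φ)) *
        hFn ψ θ φ x ^ (1 / (2 * φ)) := by
  obtain rfl : ψ = π * φ := by rw [hφ]; field_simp
  have hφ₀ : 0 < φ := pos_of_mul_pos_right hψ pi_pos.le
  have hφ_half : φ ≤ 1 / 2 := by nlinarith [pi_pos]
  have hφ₁ : φ < 1 := by linarith
  have hmono : StrictMonoOn (hFn (π * φ) θ φ) (Icc 0 θ) :=
    strictMonoOn_hFn (sin_pos_of_pos_of_lt_pi hψ (by linarith [pi_pos])) hθ hφ₀ hφ₁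
  refine ⟨hmono.mono Ioc_subset_Icc_self, ?_, fun x hx => ?_⟩
  · rw [hmono.image_Ioc_eq hθ.le (continuous_hFn _ hφ₀ hφ₁).continuousOn, hFn_zero,
      hFn_self hθ.ne' hφ₀ hφ₁]
  · exact mul_hFn_rpow_le hθ hφ₀ hφ_half (Ioc_subset_Icc_self hx)
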